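/- Let λ be a real number with 0 < λ < 1, let x be a real number with x > 0, and let k ≥ 1 be an integer. Then ζ_λ(1 − k, x) = −B_k(λ; x)/k, i.e. the Hurwitz-type λ-zeta function interpolates the λ-Bernoulli polynomials at non-positive integers. -/

import Mathlib

/-!
Both sides are read off exponential generating functions. With `D(t) = λeᵗ - 1`, the recurrence
defining `B_n(λ)` says `egf B · D = Log λ + t`, hence `egf B(λ; x) · D = (Log λ + t) e^{xt}`.
Shifting the summation index in `S_m = ∑ λⁿ (n + x)^m` gives `egf S · D = -e^{xt}`. Cancelling `D`
(its constant term is `λ - 1 ≠ 0`) yields `egf S · (Log λ + t) = -egf B(λ; x)`, whose `k`-th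
coefficient is `Log λ · S_k + k S_{k-1} = -B_k(λ; x)`; at `s = 1 - k` the two series defining
`ζ_λ` are exactly `S_k` and `S_{k-1}`.
-/

/-- The λ-Bernoulli numbers `B_n(λ)`, defined by `B_0(λ) = Log λ / (λ - 1)` and, for `n ≥ 1`,
by the recurrence `λ·∑_{k=0}^{n} C(n,k)·B_k(λ) - B_n(λ) = (1 if n = 1, 0 if n ≥ 2)`,
encoding the generating function `(Log λ + t)/(λ e^t - 1) = ∑ B_n(λ) t^n/n!`. -/
noncomputable def lambdaBernoulli (lam : ℂ) : ℕ → ℂ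
  | 0 => Complex.log lam / (lam - 1)
  | n + 1 =>
      ((if n = 0 then (1 : ℂ) else 0) -
        lam * ∑ k : Fin (n + 1), ((n + 1).choose (k : ℕ) : ℂ) * lambdaBernoulli lam k) / (lam - 1)

/-- The λ-Bernoulli polynomials `B_n(λ; x) = ∑_{k=0}^{n} C(n,k)·B_k(λ)·x^{n-k}`. -/
noncomputable def lambdaBernoulliPoly (lam : ℂ) (n : ℕ) (x : ℂ) : ℂ :=
  ∑ k ∈ Finset.range (n + 1), (n.choose k : ℂ) * lambdaBernoulli lam k * x ^ (n - k)

/-- The Hurwitz-type λ-zeta function, for real `0 < λ < 1` and real `x > 0`: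
`ζ_λ(s, x) = (log λ/(1 - s))·∑_{n≥0} λ^n·(n + x)^{1-s} + ∑_{n≥0} λ^n·(n + x)^{-s}`,
complex powers of the positive real `n + x` being taken via the real logarithm. -/
noncomputable def hurwitzLambdaZeta (lam x : ℝ) (s : ℂ) : ℂ :=
  ((Real.log lam : ℂ) / (1 - s)) *
      (∑' n : ℕ, (lam : ℂ) ^ n * ((((n : ℝ) + x : ℝ)) : ℂ) ^ (1 - s)) +
    ∑' n : ℕ, (lam : ℂ) ^ n * ((((n : ℝ) + x : ℝ)) : ℂ) ^ (-s)

open PowerSeries Finset Nat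

section ExponentialGeneratingFunction

variable {K : Type*} [Field K]

noncomputable def egf (a : ℕ → K) : K⟦X⟧ :=
  PowerSeries.mk fun n => a n / n !

theorem coeff_egf (a : ℕ → K) (n : ℕ) : coeff n (egf a) = a n / n ! := coeff_mk _ _

variable [CharZero K]

theorem egf_mul_egf (a b : ℕ → K) :
    egf a * egf b = egf fun n => ∑ j ∈ range (n + 1), (n.choose j : K) * a j * b (n - j) := by
  ext n
  rw [coeff_mul, coeff_egf, Nat.sum_antidiagonal_eq_sum_range_succ_mk, sum_div]
  refine sum_congr rfl fun j hj => ?_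
  have hjn := mem_range_succ_iff.mp hj
  have hfact := choose_mul_factorial_mul_factorial hjn
  have hchoose : (n.choose j : K) ≠ 0 := cast_ne_zero.mpr (choose_pos hjn).ne'
  simp only [coeff_egf]
  rw [← hfact]
  push_cast
  field_simp

theorem egf_one : egf (fun _ => (1 : K)) = exp K := by
  ext n
  simp [coeff_egf, coeff_exp]

theorem egf_pow (x : K) : egf (x ^ ·) = rescale x (exp K) := by
  ext n
  simp [coeff_egf, coeff_exp, coeff_rescale, div_eq_mul_inv]

theorem egf_mul_C_mul_exp_sub_one (a : ℕ → K) (c : K) :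
    egf a * (C c * exp K - 1) =
      egf fun n => c * ∑ j ∈ range (n + 1), (n.choose j : K) * a j - a n := by
  rw [← egf_one, mul_sub, mul_one, mul_left_comm, egf_mul_egf]
  ext n
  simp only [map_sub, coeff_C_mul, coeff_egf, mul_one]
  ring

theorem egf_ite_eq_C_add_X (c : K) :
    egf (fun n => if n = 0 then c else if n = 1 then 1 else 0) = C c + X := by
  ext n
  rcases n with _ | _ | n <;> simp [coeff_egf, coeff_X]

end ExponentialGeneratingFunction

section LambdaBernoulli

variable {lam : ℂ}

theorem lambdaBernoulli_recurrence (hlam : lam ≠ 1) (n : ℕ) :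
    lam * ∑ j ∈ range (n + 1), (n.choose j : ℂ) * lambdaBernoulli lam j - lambdaBernoulli lam n =
      if n = 0 then Complex.log lam else if n = 1 then 1 else 0 := by
  have hlam' : lam - 1 ≠ 0 := sub_ne_zero.mpr hlam
  rcases n with _ | n
  · simp only [lambdaBernoulli, zero_add, range_one, sum_singleton, choose_self, cast_one,
      one_mul, if_true]
    field_simp
  · rw [sum_range_succ, choose_self, cast_one, one_mul, lambdaBernoulli,
      Fin.sum_univ_eq_sum_range (fun j => ((n + 1).choose j : ℂ) * lambdaBernoulli lam j)]
    simp only [add_eq_zero, one_ne_zero, and_false, if_false, add_eq_right]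
    field_simp
    ring

theorem egf_lambdaBernoulli_mul (hlam : lam ≠ 1) :
    egf (lambdaBernoulli lam) * (C lam * exp ℂ - 1) = C (Complex.log lam) + X := by
  rw [egf_mul_C_mul_exp_sub_one, ← egf_ite_eq_C_add_X]
  exact congrArg egf (funext (lambdaBernoulli_recurrence hlam))

theorem egf_lambdaBernoulliPoly (x : ℂ) :
    egf (lambdaBernoulliPoly lam · x) = egf (lambdaBernoulli lam) * rescale x (exp ℂ) := by
  rw [← egf_pow, egf_mul_egf]
  rfl

end LambdaBernoulli

section LambdaPowerSum

noncomputable def lambdaPowerSum (lam x : ℂ) (m : ℕ) : ℂ :=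
  ∑' n : ℕ, lam ^ n * (n + x) ^ m

variable {lam : ℂ}

theorem summable_pow_mul_add_pow (hlam : ‖lam‖ < 1) (x : ℂ) (m : ℕ) :
    Summable fun n : ℕ => lam ^ n * (n + x) ^ m := by
  simp only [add_pow, mul_sum]
  refine summable_sum fun j _ => ?_
  have := (summable_pow_mul_geometric_of_norm_lt_one j hlam).mul_left (x ^ (m - j) * m.choose j)
  exact this.congr fun n => by ring

theorem lambdaPowerSum_recurrence (hlam : ‖lam‖ < 1) (x : ℂ) (m : ℕ) :
    lam * ∑ j ∈ range (m + 1), (m.choose j : ℂ) * lambdaPowerSum lam x j - lambdaPowerSum lam x m =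
      -x ^ m := by
  have hsum := summable_pow_mul_add_pow hlam x
  have hshift (n : ℕ) : lam * ∑ j ∈ range (m + 1), (m.choose j : ℂ) * (lam ^ n * (n + x) ^ j) =
      lam ^ (n + 1) * ((n + 1 : ℕ) + x) ^ m := by
    rw [cast_succ, add_right_comm, add_pow, pow_succ]
    simp only [one_pow, mul_one, mul_sum]
    exact sum_congr rfl fun j _ => by ring
  have hshifted : lam * ∑ j ∈ range (m + 1), (m.choose j : ℂ) * lambdaPowerSum lam x j =
      lambdaPowerSum lam x m - x ^ m :=
    calc _ = ∑' n : ℕ, lam * ∑ j ∈ range (m + 1), (m.choose j : ℂ) * (lam ^ n * (n + x) ^ j) := by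
          simp only [lambdaPowerSum, ← tsum_mul_left]
          rw [← Summable.tsum_finsetSum fun j _ => (hsum j).mul_left _, tsum_mul_left]
      _ = ∑' n : ℕ, lam ^ (n + 1) * ((n + 1 : ℕ) + x) ^ m := tsum_congr hshift
      _ = lambdaPowerSum lam x m - x ^ m := by
          rw [lambdaPowerSum, (hsum m).tsum_eq_zero_add]
          simp
  linear_combination hshifted

theorem egf_lambdaPowerSum_mul (hlam : ‖lam‖ < 1) (x : ℂ) :
    egf (lambdaPowerSum lam x) * (C lam * exp ℂ - 1) = -rescale x (exp ℂ) := by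
  rw [egf_mul_C_mul_exp_sub_one, ← egf_pow]
  ext n
  simp [coeff_egf, lambdaPowerSum_recurrence hlam, neg_div]

end LambdaPowerSum

theorem log_mul_lambdaPowerSum_add {lam : ℂ} (hlam : ‖lam‖ < 1) (x : ℂ) (n : ℕ) :
    Complex.log lam * lambdaPowerSum lam x (n + 1) + (n + 1) * lambdaPowerSum lam x n =
      -lambdaBernoulliPoly lam (n + 1) x := by
  have hlam1 : lam ≠ 1 := by rintro rfl; simp at hlam
  have hD : C lam * exp ℂ - 1 ≠ 0 := fun h => by
    simpa [sub_eq_zero, hlam1] using congrArg constantCoeff h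
  have hegf : egf (lambdaPowerSum lam x) * (C (Complex.log lam) + X) =
      -egf (lambdaBernoulliPoly lam · x) := by
    refine mul_right_cancel₀ hD ?_
    rw [egf_lambdaBernoulliPoly]
    linear_combination (C (Complex.log lam) + X) * egf_lambdaPowerSum_mul hlam x +
      rescale x (exp ℂ) * egf_lambdaBernoulli_mul hlam1
  have hcoeff := congrArg (coeff (n + 1)) hegf
  simp only [mul_add, map_add, coeff_mul_C, coeff_succ_mul_X, map_neg, coeff_egf,
    factorial_succ, cast_mul] at hcoeff
  field_simp at hcoeff
  rw [← neg_div, div_left_inj' (cast_ne_zero.mpr (factorial_ne_zero n))] at hcoeff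
  push_cast at hcoeff
  linear_combination hcoeff

theorem hurwitzLambdaZeta_interpolation_general (lam x : ℝ) (h0 : 0 < lam) (h1 : lam < 1)
    (k : ℕ) (hk : 1 ≤ k) :
    hurwitzLambdaZeta lam x (1 - (k : ℂ)) = -lambdaBernoulliPoly (lam : ℂ) k (x : ℂ) / (k : ℂ) := by
  obtain ⟨n, rfl⟩ : ∃ n, k = n + 1 := ⟨k - 1, by omega⟩
  have hS (m : ℕ) : ∑' i : ℕ, (lam : ℂ) ^ i * ((((i : ℝ) + x : ℝ)) : ℂ) ^ (m : ℂ) =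
      lambdaPowerSum lam x m := by
    simp [lambdaPowerSum]
  have hnorm : ‖(lam : ℂ)‖ < 1 := by simpa [abs_of_pos h0] using h1
  rw [hurwitzLambdaZeta, show 1 - (1 - ((n + 1 : ℕ) : ℂ)) = ((n + 1 : ℕ) : ℂ) by ring,
    show -(1 - ((n + 1 : ℕ) : ℂ)) = (n : ℂ) by push_cast; ring, hS, hS, Complex.ofReal_log h0.le,
    ← log_mul_lambdaPowerSum_add hnorm]
  push_cast
  field_simp

/-- for real `0 < λ < 1`, real `x > 0` and an integer `k ≥ 1`,
`ζ_λ(1 - k, x) = -B_k(λ; x)/k`: the Hurwitz-type λ-zeta function interpolates the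
λ-Bernoulli polynomials at non-positive integers. -/
theorem hurwitzLambdaZeta_interpolation (lam x : ℝ) (h0 : 0 < lam) (h1 : lam < 1)
    (hx : 0 < x) (k : ℕ) (hk : 1 ≤ k) :
    hurwitzLambdaZeta lam x (1 - (k : ℂ)) = -lambdaBernoulliPoly (lam : ℂ) k (x : ℂ) / (k : ℂ) :=
  hurwitzLambdaZeta_interpolation_general lam x h0 h1 k hk
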